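/- Let V be a finite-dimensional real inner product space, p ≥ 1, let φ be an alternating p-form on V of comass at most one, and let e = (e_1,…,e_p) be a φ-plane. Then for every vector v ∈ V, Σ_{j=1}^p ⟨v, e_j⟩ · φ(e_1,…,e_{j−1}, v, e_{j+1},…,e_p) = Σ_{j=1}^p ⟨v, e_j⟩², i.e. this sum equals the squared norm of the orthogonal projection of v onto span{e_1,…,e_p}; in particular it is nonnegative. (Equivalently, the p-form v♭ ∧ (v ⌟ φ) evaluated on a φ-plane equals |v ⌟ ξ|² ≥ 0.) -/

import Mathlib

/-!
Fix `j` and look at the linear functional `v ↦ φ(e_1,…,v,…,e_p)` (`v` in slot `j`). On the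
span of the `e_k` it is `⟨·, e_j⟩`, because `φ` is alternating and `φ(e) = 1`. On the orthogonal
complement it vanishes by a first-variation argument: if `u ⊥ e_k` for all `k` and
`c = φ(e_1,…,u,…,e_p)`, then tilting `e_j` towards `u`, to `x = ‖u‖² e_j + c u`, gives
`φ(e_1,…,x,…,e_p) = ‖u‖² + c²`, while comass at most one bounds this by
`‖x‖ = ‖u‖ √(‖u‖² + c²)`; hence `c = 0`. So `φ(e_1,…,v,…,e_p) = ⟨v, e_j⟩` and the sum is
`Σ_j ⟨v, e_j⟩²`.
-/

open scoped RealInnerProductSpace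
open Function

theorem AlternatingMap.map_update_sum_smul {R M N ι : Type*} [CommSemiring R]
    [AddCommMonoid M] [Module R M] [AddCommMonoid N] [Module R N] [Fintype ι] [DecidableEq ι]
    (f : M [⋀^ι]→ₗ[R] N) (e : ι → M) (c : ι → R) (j : ι) :
    f (update e j (∑ k, c k • e k)) = c j • f e := by
  rw [f.map_update_sum, Finset.sum_eq_single j]
  · rw [f.map_update_smul, update_eq_self]
  · intro k _ hkj
    rw [f.map_update_smul, f.map_update_self _ hkj.symm, smul_zero]
  · simp

theorem Orthonormal.update {V ι : Type*} [NormedAddCommGroup V] [InnerProductSpace ℝ V]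
    [DecidableEq ι] {e : ι → V} (he : Orthonormal ℝ e) {j : ι} {x : V} (hx : ‖x‖ = 1)
    (hxe : ∀ k ≠ j, ⟪x, e k⟫ = 0) : Orthonormal ℝ (update e j x) := by
  refine ⟨fun i => ?_, fun i k hik => ?_⟩
  · rcases eq_or_ne i j with rfl | hij
    · rwa [update_self]
    · rw [update_of_ne hij, he.1 i]
  · rcases eq_or_ne i j with rfl | hij
    · rw [update_self, update_of_ne hik.symm, hxe k hik.symm]
    rcases eq_or_ne k j with rfl | hkj
    · rw [update_self, update_of_ne hij, real_inner_comm, hxe i hij]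
    · rw [update_of_ne hij, update_of_ne hkj, he.2 hik]

theorem Orthonormal.inner_sub_sum_inner_smul {V ι : Type*} [NormedAddCommGroup V]
    [InnerProductSpace ℝ V] [Fintype ι] {e : ι → V} (he : Orthonormal ℝ e) (v : V) (k : ι) :
    ⟪v - ∑ i, ⟪v, e i⟫ • e i, e k⟫ = 0 := by
  rw [inner_sub_left, he.inner_left_fintype, conj_trivial, sub_self]

namespace AlternatingMap

variable {V ι : Type*} [NormedAddCommGroup V] [InnerProductSpace ℝ V] [DecidableEq ι]
  {φ : V [⋀^ι]→ₗ[ℝ] ℝ} {e : ι → V}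

theorem map_update_le_norm_of_comass_le_one
    (hcomass : ∀ u : ι → V, Orthonormal ℝ u → φ u ≤ 1) (he : Orthonormal ℝ e) {j : ι} {x : V}
    (hxe : ∀ k ≠ j, ⟪x, e k⟫ = 0) : φ (update e j x) ≤ ‖x‖ := by
  rcases eq_or_ne x 0 with rfl | hx
  · rw [φ.map_update_zero, norm_zero]
  have hnorm : 0 < ‖x‖ := norm_pos_iff.mpr hx
  have hunit : Orthonormal ℝ (update e j (‖x‖⁻¹ • x)) := by
    refine he.update (norm_smul_inv_norm hx) fun k hk => ?_
    rw [real_inner_smul_left, hxe k hk, mul_zero]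
  have := hcomass _ hunit
  rwa [φ.map_update_smul, smul_eq_mul, inv_mul_le_iff₀ hnorm, mul_one] at this

theorem map_update_eq_zero_of_comass_le_one
    (hcomass : ∀ u : ι → V, Orthonormal ℝ u → φ u ≤ 1) (he : Orthonormal ℝ e) (heφ : φ e = 1)
    (j : ι) {u : V} (hu : ∀ k, ⟪u, e k⟫ = 0) : φ (update e j u) = 0 := by
  set c := φ (update e j u)
  set x := ‖u‖ ^ 2 • e j + c • u
  have hxe : ∀ k ≠ j, ⟪x, e k⟫ = 0 := fun k hk => by
    rw [inner_add_left, real_inner_smul_left, real_inner_smul_left, he.2 hk.symm, hu k]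
    ring
  have hφx : φ (update e j x) = ‖u‖ ^ 2 + c ^ 2 := by
    rw [φ.map_update_add, φ.map_update_smul, φ.map_update_smul, update_eq_self, heφ]
    simp only [smul_eq_mul]
    ring
  have hx : ‖x‖ ^ 2 = ‖u‖ ^ 2 * (‖u‖ ^ 2 + c ^ 2) := by
    have horth : ⟪‖u‖ ^ 2 • e j, c • u⟫ = 0 := by
      rw [real_inner_smul_left, real_inner_smul_right, real_inner_comm, hu j]
      ring
    rw [norm_add_sq_real, horth, norm_smul, norm_smul, mul_pow, mul_pow, Real.norm_eq_abs,
      Real.norm_eq_abs, sq_abs, sq_abs, he.1 j]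
    ring
  have hle := hφx ▸ map_update_le_norm_of_comass_le_one hcomass he hxe
  have hsq : (‖u‖ ^ 2 + c ^ 2) ^ 2 ≤ ‖x‖ ^ 2 := pow_le_pow_left₀ (by positivity) hle 2
  have hc2 : c ^ 2 = 0 := by nlinarith [sq_nonneg c, mul_nonneg (sq_nonneg c) (sq_nonneg ‖u‖)]
  exact pow_eq_zero_iff two_ne_zero |>.mp hc2

theorem map_update_eq_inner_of_comass_le_one [Fintype ι]
    (hcomass : ∀ u : ι → V, Orthonormal ℝ u → φ u ≤ 1) (he : Orthonormal ℝ e) (heφ : φ e = 1)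
    (j : ι) (v : V) : φ (update e j v) = ⟪v, e j⟫ := by
  have hsplit : v = (v - ∑ k, ⟪v, e k⟫ • e k) + ∑ k, ⟪v, e k⟫ • e k := (sub_add_cancel _ _).symm
  conv_lhs => rw [hsplit]
  rw [φ.map_update_add, φ.map_update_sum_smul, heφ, smul_eq_mul, mul_one,
    map_update_eq_zero_of_comass_le_one hcomass he heφ j (he.inner_sub_sum_inner_smul v),
    zero_add]

end AlternatingMap

theorem df_wedge_dphi_f_on_phi_plane_general
    {V : Type*} [NormedAddCommGroup V] [InnerProductSpace ℝ V]
    {p : ℕ}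
    (φ : V [⋀^Fin p]→ₗ[ℝ] ℝ)
    (hcomass : ∀ u : Fin p → V, Orthonormal ℝ u → φ u ≤ 1)
    (e : Fin p → V) (he : Orthonormal ℝ e) (heφ : φ e = 1) (v : V) :
    (∑ j, ⟪v, e j⟫ * φ (Function.update e j v)) = ∑ j, ⟪v, e j⟫ ^ 2 ∧
    0 ≤ ∑ j, ⟪v, e j⟫ * φ (Function.update e j v) := by
  have hsum : (∑ j, ⟪v, e j⟫ * φ (Function.update e j v)) = ∑ j, ⟪v, e j⟫ ^ 2 := by
    simp only [φ.map_update_eq_inner_of_comass_le_one hcomass he heφ, sq]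
  exact ⟨hsum, hsum ▸ Finset.sum_nonneg fun j _ => sq_nonneg _⟩

/-- **Corollary 2.7** (Harvey–Lawson), pointwise form.  For a comass-one form `φ`, a `φ`-plane
`e` and any vector `v`: `Σ_j ⟨v,e_j⟩·φ(e_1,…,v,…,e_p) = Σ_j ⟨v,e_j⟩²`, the squared norm of the
orthogonal projection of `v` onto the plane; in particular the sum is nonnegative. -/
theorem df_wedge_dphi_f_on_phi_plane
    {V : Type*} [NormedAddCommGroup V] [InnerProductSpace ℝ V]
    [FiniteDimensional ℝ V] {p : ℕ} (hp : 1 ≤ p)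
    (φ : V [⋀^Fin p]→ₗ[ℝ] ℝ)
    (hcomass : ∀ u : Fin p → V, Orthonormal ℝ u → φ u ≤ 1)
    (e : Fin p → V) (he : Orthonormal ℝ e) (heφ : φ e = 1) (v : V) :
    (∑ j, ⟪v, e j⟫ * φ (Function.update e j v)) = ∑ j, ⟪v, e j⟫ ^ 2 ∧
    0 ≤ ∑ j, ⟪v, e j⟫ * φ (Function.update e j v) :=
  df_wedge_dphi_f_on_phi_plane_general φ hcomass e he heφ v
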